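/- With S(z,v,w) = 2zw(2 + (1-w)z)/(4 + w(v-1)z^2 - 2z(v+w)): the coefficient of z^n in ∂_v S(z,1,w)|_{w=1} equals n/4 for n ≥ 2, and the coefficient of z^n in ∂_w S(z,v,1)|_{v=1} equals n/2 for n ≥ 2. -/

import Mathlib

open PowerSeries

/-- `z` as a power series over polynomials in `v = X 0` and `w = X 1`. -/
noncomputable def Zq : PowerSeries (MvPolynomial (Fin 2) ℚ) := PowerSeries.X

/-- `v` as a power series over polynomials in `v, w`. -/
noncomputable def Vq : PowerSeries (MvPolynomial (Fin 2) ℚ) := PowerSeries.C (MvPolynomial.X 0 : MvPolynomial (Fin 2) ℚ)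

/-- `w` as a power series over polynomials in `v, w`. -/
noncomputable def Wq : PowerSeries (MvPolynomial (Fin 2) ℚ) := PowerSeries.C (MvPolynomial.X 1 : MvPolynomial (Fin 2) ℚ)

/-! Evaluating a polynomial at `(1 + ε₀, 1 + ε₁)` with `εᵢ εⱼ = 0` computes its value at `(1, 1)`
together with both partial derivatives there, so it suffices to map `S` to power series over
`ℚ ⊕ ℚ²` (the trivial square-zero extension) and to solve the functional equation there. Over that
ring the denominator gives the recurrence `4 sₙ₊₃ = 2(v + w) sₙ₊₂ - w(v - 1) sₙ₊₁`, whose solution is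
`sₙ = 1 + n (ε₀/4 + ε₁/2)` for `n ≥ 2`. -/

open TrivSqZeroExt

namespace TrivSqZeroExt

variable {R M : Type*} [AddMonoidWithOne R] [AddMonoid M]

@[simp]
theorem fst_ofNat (n : ℕ) [n.AtLeastTwo] : (ofNat(n) : TrivSqZeroExt R M).fst = ofNat(n) :=
  fst_natCast n

@[simp]
theorem snd_ofNat (n : ℕ) [n.AtLeastTwo] : (ofNat(n) : TrivSqZeroExt R M).snd = 0 :=
  snd_natCast n

end TrivSqZeroExt

namespace MvPolynomial

variable {σ R : Type*} [CommRing R] [DecidableEq σ]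

theorem aeval_inl_add_inr_single (x : σ → R) (p : MvPolynomial σ R) :
    aeval (fun i => inl (x i) + inr (Pi.single i 1)) p =
      inl (eval x p) + inr fun i => eval x (pderiv i p) := by
  induction p using MvPolynomial.induction_on with
  | C a => simp [algebraMap_eq_inl, ← Pi.zero_def]
  | add p q hp hq =>
    simp only [map_add, hp, hq]
    ext <;> simp [add_add_add_comm]
  | mul_X p i hp =>
    rw [map_mul, hp, aeval_X]
    ext j
    · simp
    · by_cases h : j = i
      · subst h; simp [pderiv_X]
      · simp [pderiv_X, h, mul_comm]

end MvPolynomial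

section ShelfEquation

variable {R R' : Type*} [CommRing R] [CommRing R']

def ShelfEquation (v w : R) (S : R⟦X⟧) : Prop :=
  S * (4 + C w * (C v - 1) * X ^ 2 - 2 * X * (C v + C w)) = 2 * X * C w * (2 + (1 - C w) * X)

variable {v w : R} {S : R⟦X⟧}

theorem ShelfEquation.map (hS : ShelfEquation v w S) (f : R →+* R') :
    ShelfEquation (f v) (f w) (PowerSeries.map f S) := by
  simpa only [ShelfEquation, map_mul, map_add, map_sub, map_ofNat, map_one, map_pow, map_C, map_X]
    using congrArg (PowerSeries.map f) hS

theorem ShelfEquation.coeff_eq (hS : ShelfEquation v w S) (n : ℕ) :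
    4 * coeff n S + w * (v - 1) * coeff n (S * X ^ 2) =
      2 * (v + w) * coeff n (S * X) + 4 * w * coeff n X + 2 * w * (1 - w) * coeff n (X ^ 2) := by
  have hS' : C 4 * S + C (w * (v - 1)) * (S * X ^ 2) =
      C (2 * (v + w)) * (S * X) + C (4 * w) * X + C (2 * w * (1 - w)) * X ^ 2 := by
    simp only [map_mul, map_sub, map_add, map_ofNat, map_one]
    rw [ShelfEquation] at hS
    linear_combination hS
  simpa only [map_add, coeff_C_mul] using congrArg (coeff n) hS'

theorem ShelfEquation.coeff_zero (hS : ShelfEquation v w S) : 4 * coeff 0 S = 0 := by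
  simpa using hS.coeff_eq 0

theorem ShelfEquation.coeff_one (hS : ShelfEquation v w S) :
    4 * coeff 1 S = 2 * (v + w) * coeff 0 S + 4 * w := by
  simpa [coeff_X_pow, coeff_mul_X_pow'] using hS.coeff_eq 1

theorem ShelfEquation.coeff_two (hS : ShelfEquation v w S) :
    4 * coeff 2 S + w * (v - 1) * coeff 0 S = 2 * (v + w) * coeff 1 S + 2 * w * (1 - w) := by
  simpa [coeff_X_pow, coeff_X, coeff_mul_X_pow'] using hS.coeff_eq 2

theorem ShelfEquation.coeff_add_three (hS : ShelfEquation v w S) (n : ℕ) :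
    4 * coeff (n + 3) S + w * (v - 1) * coeff (n + 1) S = 2 * (v + w) * coeff (n + 2) S := by
  simpa [coeff_X_pow, coeff_X, coeff_mul_X_pow'] using hS.coeff_eq (n + 3)

end ShelfEquation

local notation "𝔸" => TrivSqZeroExt ℚ (Fin 2 → ℚ)

theorem ShelfEquation.coeff_add_two_eq {T : 𝔸⟦X⟧}
    (hT : ShelfEquation (1 + inr (Pi.single 0 1)) (1 + inr (Pi.single 1 1)) T) (n : ℕ) :
    coeff (n + 2) T = 1 + inr ((n + 2 : ℚ) • ![1 / 4, 1 / 2]) := by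
  have isUnit_four : IsUnit (4 : 𝔸) := by
    simpa only [map_ofNat] using (IsUnit.mk0 (4 : ℚ) four_ne_zero).map (algebraMap ℚ 𝔸)
  have h0 : coeff 0 T = 0 := isUnit_four.mul_left_cancel (by rw [hT.coeff_zero, mul_zero])
  have h1 : coeff 1 T = 1 + inr (Pi.single 1 1) :=
    isUnit_four.mul_left_cancel (by rw [hT.coeff_one, h0]; ring)
  -- the term `w (v - 1) sₙ₊₁ = ε₀ sₙ₊₁` of the recurrence only sees the constant part of `sₙ₊₁`
  suffices key : ∀ m : ℕ, coeff (m + 2) T = 1 + inr ((m + 2 : ℚ) • ![1 / 4, 1 / 2]) ∧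
      (coeff (m + 1) T).fst = 1 from (key n).1
  intro m
  induction m with
  | zero =>
    refine ⟨isUnit_four.mul_left_cancel ?_, by simp [h1]⟩
    rw [eq_sub_of_add_eq hT.coeff_two, h0, h1]
    ext i
    · simp; norm_num
    · fin_cases i <;> norm_num [Matrix.vecHead, Matrix.vecTail]
  | succ m ih =>
    obtain ⟨ih, fst_coeff⟩ := ih
    refine ⟨isUnit_four.mul_left_cancel ?_, by simp [ih]⟩
    rw [eq_sub_of_add_eq (hT.coeff_add_three m), ih]
    ext i
    · simp [fst_coeff]; norm_num
    · fin_cases i <;> norm_num [fst_coeff, Matrix.vecHead, Matrix.vecTail] <;> ring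

/-- With `S(z,v,w) = 2zw(2 + (1-w)z)/(4 + w(v-1)z² - 2z(v+w))` (characterized by
clearing the denominator, whose constant term `4` is invertible): the coefficient of
`zⁿ` in `∂_v S|_{v=w=1}` equals `n/4` and that of `∂_w S|_{v=w=1}` equals `n/2`, for
all `n ≥ 2` (i.e. `E(L_n) = n/4` and `E(C_n) = n/2`). -/
theorem shelf_refined_expectations (S : PowerSeries (MvPolynomial (Fin 2) ℚ))
    (hS : S * (4 + Wq * (Vq - 1) * Zq ^ 2 - 2 * Zq * (Vq + Wq))
        = 2 * Zq * Wq * (2 + (1 - Wq) * Zq)) :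
    ∀ n : ℕ, 2 ≤ n →
      MvPolynomial.eval (fun _ => (1 : ℚ))
          (MvPolynomial.pderiv 0 (PowerSeries.coeff n S)) = n / 4 ∧
      MvPolynomial.eval (fun _ => (1 : ℚ))
          (MvPolynomial.pderiv 1 (PowerSeries.coeff n S)) = n / 2 := by
  intro n hn
  obtain ⟨m, rfl⟩ := Nat.exists_eq_add_of_le' hn
  let jet : MvPolynomial (Fin 2) ℚ →ₐ[ℚ] 𝔸 :=
    MvPolynomial.aeval fun i => inl 1 + inr (Pi.single i 1)
  have hT : ShelfEquation (1 + inr (Pi.single 0 1)) (1 + inr (Pi.single 1 1))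
      (PowerSeries.map (jet : _ →+* 𝔸) S) := by
    have hS' : ShelfEquation (MvPolynomial.X 0) (MvPolynomial.X 1) S := hS
    simpa [jet] using hS'.map (jet : _ →+* 𝔸)
  have h := congrArg TrivSqZeroExt.snd (hT.coeff_add_two_eq m)
  rw [coeff_map, RingHom.coe_coe, MvPolynomial.aeval_inl_add_inr_single] at h
  constructor
  · simpa [div_eq_mul_inv] using congrFun h 0
  · simpa [div_eq_mul_inv] using congrFun h 1
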